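/- Every 3-uniform hypergraph G on n vertices in which every pair of vertices is contained in exactly 0 or exactly 2 edges (i.e., every vertex link is a 2-regular graph) contains a 0-immersion of a closed surface; that is, there is a 2-dimensional simplicial complex S homeomorphic to a disjoint union of closed surfaces and a simplicial map φ: S → G that is injective on edges (1-faces) and on triangles (2-faces). -/
import Mathlib

open Finset
set_option linter.unusedSectionVars false

namespace Stmt18

variable {V : Type*} [Fintype V] [DecidableEq V]

lemma triple_rot (a b c : V) : ({a,b,c} : Finset V) = {b,c,a} := by
  ext x; simp; tauto

lemma triple_swap (a b c : V) : ({a,b,c} : Finset V) = {a,c,b} := by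
  ext x; simp; tauto

lemma triple_ne {a b c : V} (h : ({a,b,c} : Finset V).card = 3) :
    a ≠ b ∧ a ≠ c ∧ b ≠ c := by
  refine ⟨?_, ?_, ?_⟩ <;> rintro rfl
  · rw [show ({a,a,c} : Finset V) = {a,c} from by ext x; simp; try tauto] at h
    have := Finset.card_insert_le a ({c} : Finset V); simp at this; omega
  · rw [show ({a,b,a} : Finset V) = {a,b} from by ext x; simp; try tauto] at h
    have := Finset.card_insert_le a ({b} : Finset V); simp at this; omega
  · rw [show ({a,b,b} : Finset V) = {a,b} from by ext x; simp; try tauto] at h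
    have := Finset.card_insert_le a ({b} : Finset V); simp at this; omega

variable (E : Finset (Finset V))

/-- flags -/
abbrev Flag := {x : V × V × V // ({x.1, x.2.1, x.2.2} : Finset V) ∈ E}

variable {E}

def v1 (q : Flag E) : V := q.1.1
def v2 (q : Flag E) : V := q.1.2.1
def v3 (q : Flag E) : V := q.1.2.2

lemma flag_mem (q : Flag E) : ({v1 q, v2 q, v3 q} : Finset V) ∈ E := q.2

lemma flag_ext {q q' : Flag E} (h1 : v1 q = v1 q') (h2 : v2 q = v2 q')
    (h3 : v3 q = v3 q') : q = q' := by
  apply Subtype.ext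
  exact Prod.ext h1 (Prod.ext h2 h3)

variable (hunif : ∀ e ∈ E, e.card = 3)

section Basic
include hunif

lemma flag_ne (q : Flag E) : v1 q ≠ v2 q ∧ v1 q ≠ v3 q ∧ v2 q ≠ v3 q :=
  triple_ne (hunif _ q.2)

end Basic

variable (hpairs : ∀ u v : V, u ≠ v →
      (E.filter (fun e => u ∈ e ∧ v ∈ e)).card = 0 ∨
      (E.filter (fun e => u ∈ e ∧ v ∈ e)).card = 2)

section PS
include hunif hpairs

lemma pair_struct {v c : V} (hvc : v ≠ c) {b : V} (hb : ({v,c,b} : Finset V) ∈ E) :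
    ∃ b', ({v,c,b'} : Finset V) ∈ E ∧ b' ≠ b ∧
      ∀ x, ({v,c,x} : Finset V) ∈ E → x = b ∨ x = b' := by
  have hmem : ({v,c,b} : Finset V) ∈ E.filter (fun e => v ∈ e ∧ c ∈ e) := by
    simp [Finset.mem_filter, hb]
  have hcard : (E.filter (fun e => v ∈ e ∧ c ∈ e)).card = 2 := by
    rcases hpairs v c hvc with h | h
    · exact absurd (Finset.card_eq_zero.mp h ▸ hmem) (Finset.notMem_empty _)
    · exact h
  obtain ⟨e1, e2, hne, hset⟩ := Finset.card_eq_two.mp hcard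
  -- extract third vertex of an edge containing v, c
  have extract : ∀ e ∈ E, v ∈ e → c ∈ e → ∃ x, x ≠ v ∧ x ≠ c ∧ e = {v, c, x} := by
    intro e he hv hc
    have h3 : e.card = 3 := hunif e he
    have hcard1 : ((e.erase v).erase c).card = 1 := by
      rw [Finset.card_erase_of_mem, Finset.card_erase_of_mem hv, h3]
      exact Finset.mem_erase.mpr ⟨(Ne.symm hvc), hc⟩
    obtain ⟨x, hx⟩ := Finset.card_eq_one.mp hcard1
    have hxm : x ∈ (e.erase v).erase c := hx ▸ Finset.mem_singleton_self x
    rw [Finset.mem_erase, Finset.mem_erase] at hxm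
    refine ⟨x, hxm.2.1, hxm.1, ?_⟩
    apply Finset.eq_of_subset_of_card_le
    · intro y hy
      simp only [Finset.mem_insert, Finset.mem_singleton]
      by_cases h1 : y = v
      · tauto
      by_cases h2 : y = c
      · tauto
      have : y ∈ (e.erase v).erase c := by
        rw [Finset.mem_erase, Finset.mem_erase]; exact ⟨h2, h1, hy⟩
      rw [hx] at this; simp at this; tauto
    · rw [h3]
      have := Finset.card_insert_le v ({c, x} : Finset V)
      have := Finset.card_insert_le c ({x} : Finset V)
      simp at *; omega
  have he1E : e1 ∈ E ∧ v ∈ e1 ∧ c ∈ e1 := by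
    have : e1 ∈ E.filter (fun e => v ∈ e ∧ c ∈ e) := by rw [hset]; simp
    simpa [Finset.mem_filter] using this
  have he2E : e2 ∈ E ∧ v ∈ e2 ∧ c ∈ e2 := by
    have : e2 ∈ E.filter (fun e => v ∈ e ∧ c ∈ e) := by rw [hset]; simp
    simpa [Finset.mem_filter] using this
  obtain ⟨x1, hx1v, hx1c, he1⟩ := extract e1 he1E.1 he1E.2.1 he1E.2.2
  obtain ⟨x2, hx2v, hx2c, he2⟩ := extract e2 he2E.1 he2E.2.1 he2E.2.2
  -- membership of {v,c,b}
  have hbmem : ({v,c,b} : Finset V) = e1 ∨ ({v,c,b} : Finset V) = e2 := by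
    have : ({v,c,b} : Finset V) ∈ ({e1, e2} : Finset (Finset V)) := hset ▸ hmem
    simpa using this
  have hb_ne : b ≠ v ∧ b ≠ c := by
    have := triple_ne (hunif _ hb); exact ⟨fun h => this.2.1 h.symm, fun h => this.2.2 h.symm⟩
  have third_eq : ∀ x y : V, x ≠ v → x ≠ c → ({v,c,x} : Finset V) = {v,c,y} → x = y := by
    intro x y hxv hxc hxy
    have : x ∈ ({v,c,y} : Finset V) := hxy ▸ (by simp)
    simp at this; tauto
  -- wlog {v,c,b} = e1
  rcases hbmem with hbe | hbe
  · refine ⟨x2, he2 ▸ he2E.1, ?_, ?_⟩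
    · intro h; apply hne; rw [← hbe, he2, h]
    · intro x hx
      have hx_ne : x ≠ v ∧ x ≠ c := by
        have := triple_ne (hunif _ hx)
        exact ⟨fun h => this.2.1 h.symm, fun h => this.2.2 h.symm⟩
      have : ({v,c,x} : Finset V) ∈ ({e1, e2} : Finset (Finset V)) := by
        rw [← hset]; simp [Finset.mem_filter, hx]
      simp only [Finset.mem_insert, Finset.mem_singleton] at this
      rcases this with h | h
      · left; exact third_eq x b hx_ne.1 hx_ne.2 (h.trans hbe.symm)
      · right; exact third_eq x x2 hx_ne.1 hx_ne.2 (h.trans he2)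
  · refine ⟨x1, he1 ▸ he1E.1, ?_, ?_⟩
    · intro h; apply hne; rw [he1, h, hbe]
    · intro x hx
      have hx_ne : x ≠ v ∧ x ≠ c := by
        have := triple_ne (hunif _ hx)
        exact ⟨fun h => this.2.1 h.symm, fun h => this.2.2 h.symm⟩
      have : ({v,c,x} : Finset V) ∈ ({e1, e2} : Finset (Finset V)) := by
        rw [← hset]; simp [Finset.mem_filter, hx]
      simp only [Finset.mem_insert, Finset.mem_singleton] at this
      rcases this with h | h
      · right; exact third_eq x x1 hx_ne.1 hx_ne.2 (h.trans he1)
      · left; exact third_eq x b hx_ne.1 hx_ne.2 (h.trans hbe.symm)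

end PS


section Next

lemma flag_mem' (q : Flag E) : ({v1 q, v3 q, v2 q} : Finset V) ∈ E := by
  rw [← triple_swap]; exact q.2

include hunif hpairs in
lemma nxt_aux (q : Flag E) : ∃ b', ({v1 q, v3 q, b'} : Finset V) ∈ E ∧ b' ≠ v2 q ∧
    ∀ x, ({v1 q, v3 q, x} : Finset V) ∈ E → x = v2 q ∨ x = b' :=
  pair_struct hunif hpairs (flag_ne hunif q).2.1 (flag_mem' q)

noncomputable def nxt (q : Flag E) : Flag E :=
  ⟨(v1 q, v3 q, (nxt_aux hunif hpairs q).choose), (nxt_aux hunif hpairs q).choose_spec.1⟩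

lemma nxt_v1 (q : Flag E) : v1 (nxt hunif hpairs q) = v1 q := rfl
lemma nxt_v2 (q : Flag E) : v2 (nxt hunif hpairs q) = v3 q := rfl
lemma nxt_ne (q : Flag E) : v3 (nxt hunif hpairs q) ≠ v2 q :=
  (nxt_aux hunif hpairs q).choose_spec.2.1
lemma nxt_spec (q : Flag E) : ∀ x, ({v1 q, v3 q, x} : Finset V) ∈ E →
    x = v2 q ∨ x = v3 (nxt hunif hpairs q) :=
  (nxt_aux hunif hpairs q).choose_spec.2.2

lemma nxt_inj : Function.Injective (nxt hunif hpairs) := by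
  intro q1 q2 h
  have h1 : v1 q1 = v1 q2 := by
    rw [← nxt_v1 hunif hpairs q1, ← nxt_v1 hunif hpairs q2, h]
  have h3 : v3 q1 = v3 q2 := by
    rw [← nxt_v2 hunif hpairs q1, ← nxt_v2 hunif hpairs q2, h]
  have hx : v3 (nxt hunif hpairs q1) = v3 (nxt hunif hpairs q2) := by rw [h]
  have hmem : ({v1 q2, v3 q2, v2 q1} : Finset V) ∈ E := by
    rw [← h1, ← h3]; exact flag_mem' q1
  rcases nxt_spec hunif hpairs q2 (v2 q1) hmem with h2 | h2
  · exact flag_ext h1 h2 h3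
  · exact absurd (hx.trans h2.symm) (nxt_ne hunif hpairs q1)

noncomputable def sig : Equiv.Perm (Flag E) :=
  Equiv.ofBijective (nxt hunif hpairs)
    (Finite.injective_iff_bijective.mp (nxt_inj hunif hpairs))

lemma sig_apply (q : Flag E) : sig hunif hpairs q = nxt hunif hpairs q := rfl

def tau (q : Flag E) : Flag E := ⟨(v1 q, v3 q, v2 q), flag_mem' q⟩

lemma tau_v1 (q : Flag E) : v1 (tau q) = v1 q := rfl
lemma tau_v2 (q : Flag E) : v2 (tau q) = v3 q := rfl
lemma tau_v3 (q : Flag E) : v3 (tau q) = v2 q := rfl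

lemma tau_tau (q : Flag E) : tau (tau q) = q := flag_ext rfl rfl rfl

lemma sig_tau_sig (q : Flag E) : sig hunif hpairs (tau (sig hunif hpairs q)) = tau q := by
  set s := sig hunif hpairs q with hs
  have hy : ({v1 q, v3 q, v3 (sig hunif hpairs (tau s))} : Finset V) ∈ E := by
    have := (sig hunif hpairs (tau s)).2
    -- v1 (sig (tau s)) = v1 (tau s) = v1 s = v1 q ; v2 (sig (tau s)) = v3 (tau s) = v2 s = v3 q
    exact this
  have hyne : v3 (sig hunif hpairs (tau s)) ≠ v2 (tau s) := nxt_ne hunif hpairs (tau s)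
  have hv2 : v2 (tau s) = v3 s := rfl
  have hv3s : v3 s = v3 (nxt hunif hpairs q) := rfl
  rcases nxt_spec hunif hpairs q _ hy with h | h
  · exact flag_ext rfl rfl h
  · exact absurd (h.trans hv3s.symm) (hv2 ▸ hyne)

lemma tau_sig_pow (n : ℕ) (q : Flag E) :
    ((sig hunif hpairs) ^ n) (tau (((sig hunif hpairs) ^ n) q)) = tau q := by
  induction n generalizing q with
  | zero => simp
  | succ k ih =>
    have h1 : ((sig hunif hpairs) ^ (k+1)) q = ((sig hunif hpairs) ^ k) (sig hunif hpairs q) := by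
      rw [pow_succ]; exact Equiv.Perm.mul_apply _ _ _
    rw [h1]
    have h2 : ∀ x, ((sig hunif hpairs) ^ (k+1)) x = sig hunif hpairs (((sig hunif hpairs) ^ k) x) := by
      intro x; rw [pow_succ']; exact Equiv.Perm.mul_apply _ _ _
    rw [h2, ih, sig_tau_sig]

lemma sig_pow_order (q : Flag E) :
    ((sig hunif hpairs) ^ (orderOf (sig hunif hpairs))) q = q := by
  rw [pow_orderOf_eq_one]; rfl

lemma sig_pow_mul_order (a : ℕ) (q : Flag E) :
    ((sig hunif hpairs) ^ (a * orderOf (sig hunif hpairs))) q = q := by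
  rw [Nat.mul_comm, pow_mul, pow_orderOf_eq_one, one_pow]; rfl

lemma tau_pow (a : ℕ) (x : Flag E) :
    tau (((sig hunif hpairs) ^ a) x) =
      ((sig hunif hpairs) ^ (a * orderOf (sig hunif hpairs) - a)) (tau x) := by
  have hord : 1 ≤ orderOf (sig hunif hpairs) := orderOf_pos _
  have hle : a ≤ a * orderOf (sig hunif hpairs) := Nat.le_mul_of_pos_right a hord
  have key := tau_sig_pow hunif hpairs a x
  calc tau (((sig hunif hpairs) ^ a) x)
      = ((sig hunif hpairs) ^ (a * orderOf (sig hunif hpairs)))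
          (tau (((sig hunif hpairs) ^ a) x)) := (sig_pow_mul_order hunif hpairs a _).symm
    _ = ((sig hunif hpairs) ^ (a * orderOf (sig hunif hpairs) - a))
          (((sig hunif hpairs) ^ a) (tau (((sig hunif hpairs) ^ a) x))) := by
        rw [← Equiv.Perm.mul_apply, ← pow_add, Nat.sub_add_cancel hle]
    _ = ((sig hunif hpairs) ^ (a * orderOf (sig hunif hpairs) - a)) (tau x) := by rw [key]

lemma v1_pow (n : ℕ) (q : Flag E) : v1 (((sig hunif hpairs) ^ n) q) = v1 q := by
  induction n with
  | zero => rfl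
  | succ k ih =>
    have h : ((sig hunif hpairs) ^ (k+1)) q = sig hunif hpairs (((sig hunif hpairs) ^ k) q) := by
      rw [pow_succ']; exact Equiv.Perm.mul_apply _ _ _
    rw [h, sig_apply, nxt_v1, ih]

/-- the equivalence relation identifying flags belonging to the same clone -/
def rel (q q' : Flag E) : Prop :=
  (∃ n : ℕ, ((sig hunif hpairs) ^ n) q = q') ∨ (∃ n : ℕ, ((sig hunif hpairs) ^ n) q = tau q')

lemma rel_refl (q : Flag E) : rel hunif hpairs q q := Or.inl ⟨0, rfl⟩

lemma pow_symm {q q' : Flag E} {n : ℕ} (h : ((sig hunif hpairs) ^ n) q = q') :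
    ∃ k : ℕ, ((sig hunif hpairs) ^ k) q' = q := by
  refine ⟨n * orderOf (sig hunif hpairs) - n, ?_⟩
  have hle : n ≤ n * orderOf (sig hunif hpairs) := Nat.le_mul_of_pos_right n (orderOf_pos _)
  rw [← h, ← Equiv.Perm.mul_apply, ← pow_add, Nat.sub_add_cancel hle]
  exact sig_pow_mul_order hunif hpairs n q

lemma rel_symm {q q' : Flag E} (h : rel hunif hpairs q q') : rel hunif hpairs q' q := by
  rcases h with ⟨n, h⟩ | ⟨n, h⟩
  · exact Or.inl (pow_symm hunif hpairs h)
  · -- sig^n q = tau q' ; then sig^n q' = tau q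
    refine Or.inr ⟨n, ?_⟩
    have hq' : q' = tau (((sig hunif hpairs) ^ n) q) := by rw [h, tau_tau]
    rw [hq']
    exact tau_sig_pow hunif hpairs n q

lemma rel_trans {q q' q'' : Flag E} (h1 : rel hunif hpairs q q')
    (h2 : rel hunif hpairs q' q'') : rel hunif hpairs q q'' := by
  rcases h1 with ⟨n, h1⟩ | ⟨n, h1⟩ <;> rcases h2 with ⟨k, h2⟩ | ⟨k, h2⟩
  · exact Or.inl ⟨k + n, by rw [pow_add, Equiv.Perm.mul_apply, h1, h2]⟩
  · exact Or.inr ⟨k + n, by rw [pow_add, Equiv.Perm.mul_apply, h1, h2]⟩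
  · -- sig^n q = tau q', sig^k q' = q''  ⇒ tau q'' = tau (sig^k q') = sig^(M-k) (tau q') = ... q
    refine Or.inr ⟨(k * orderOf (sig hunif hpairs) - k) + n, ?_⟩
    rw [pow_add, Equiv.Perm.mul_apply, h1, ← tau_pow hunif hpairs, h2]
  · -- sig^n q = tau q', sig^k q' = tau q'' ⇒ q'' = tau (sig^k q') = sig^(M-k) (tau q') = sig^(M-k+n) q
    refine Or.inl ⟨(k * orderOf (sig hunif hpairs) - k) + n, ?_⟩
    rw [pow_add, Equiv.Perm.mul_apply, h1, ← tau_pow hunif hpairs]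
    rw [h2, tau_tau]

def cloneSetoid : Setoid (Flag E) :=
  ⟨rel hunif hpairs, rel_refl hunif hpairs, rel_symm hunif hpairs, rel_trans hunif hpairs⟩

def CloneT := Quotient (cloneSetoid hunif hpairs)

def mk (q : Flag E) : CloneT hunif hpairs := Quotient.mk _ q

lemma mk_exact {q q' : Flag E} (h : mk hunif hpairs q = mk hunif hpairs q') :
    rel hunif hpairs q q' := Quotient.exact h

lemma mk_sound {q q' : Flag E} (h : rel hunif hpairs q q') :
    mk hunif hpairs q = mk hunif hpairs q' := Quotient.sound h

lemma rel_v1 {q q' : Flag E} (h : rel hunif hpairs q q') : v1 q = v1 q' := by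
  rcases h with ⟨n, h⟩ | ⟨n, h⟩
  · rw [← h, v1_pow]
  · have : v1 q = v1 (tau q') := by rw [← h, v1_pow]
    rw [this]; rfl

/-- vertex map -/
def vmap : CloneT hunif hpairs → V :=
  Quotient.lift v1 (fun _ _ h => rel_v1 hunif hpairs h)

lemma vmap_mk (q : Flag E) : vmap hunif hpairs (mk hunif hpairs q) = v1 q := rfl

lemma mk_sig (q : Flag E) : mk hunif hpairs (sig hunif hpairs q) = mk hunif hpairs q :=
  mk_sound hunif hpairs (Or.inl (pow_symm hunif hpairs (n := 1) (by rw [pow_one])))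

lemma mk_pow (n : ℕ) (q : Flag E) :
    mk hunif hpairs (((sig hunif hpairs) ^ n) q) = mk hunif hpairs q :=
  mk_sound hunif hpairs (Or.inl (pow_symm hunif hpairs rfl))

lemma mk_tau (q : Flag E) : mk hunif hpairs (tau q) = mk hunif hpairs q := by
  apply mk_sound
  exact rel_symm hunif hpairs (Or.inr ⟨0, rfl⟩)

/-- clone coherence: the clone of `x` determined by an edge `{x,a,b}` depends only on `x,a`. -/
lemma clone_coh {x a b b' : V} (h : ({x,a,b} : Finset V) ∈ E) (h' : ({x,a,b'} : Finset V) ∈ E) :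
    mk hunif hpairs ⟨(x,a,b), h⟩ = mk hunif hpairs ⟨(x,a,b'), h'⟩ := by
  by_cases hbb : b = b'
  · subst hbb; rfl
  · set q : Flag E := ⟨(x,a,b), h⟩ with hq
    have h2 : sig hunif hpairs (tau q) = (⟨(x,a,b'), h'⟩ : Flag E) := by
      have hm : ({v1 (tau q), v3 (tau q), b'} : Finset V) ∈ E := h'
      rcases nxt_spec hunif hpairs (tau q) b' hm with hc | hc
      · exact absurd (show b = b' from hc.symm) hbb
      · exact flag_ext rfl rfl hc.symm
    rw [← h2, mk_sig, mk_tau]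

def rot (q : Flag E) : Flag E := ⟨(v2 q, v3 q, v1 q), by rw [← triple_rot]; exact q.2⟩

lemma rot_v1 (q : Flag E) : v1 (rot q) = v2 q := rfl
lemma rot_v2 (q : Flag E) : v2 (rot q) = v3 q := rfl
lemma rot_v3 (q : Flag E) : v3 (rot q) = v1 q := rfl

lemma rot_rot_rot (q : Flag E) : rot (rot (rot q)) = q := flag_ext rfl rfl rfl

/-- the lifted triangle of a flag -/
noncomputable def T (q : Flag E) : Finset (CloneT hunif hpairs) :=
  letI := Classical.decEq (CloneT hunif hpairs)
  {mk hunif hpairs q, mk hunif hpairs (rot q), mk hunif hpairs (rot (rot q))}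

noncomputable instance : DecidableEq (CloneT hunif hpairs) := Classical.decEq _

noncomputable instance : Fintype (CloneT hunif hpairs) :=
  @Quotient.fintype (Flag E) _ (cloneSetoid hunif hpairs) (fun _ _ => Classical.dec _)

lemma T_def (q : Flag E) : T hunif hpairs q =
    {mk hunif hpairs q, mk hunif hpairs (rot q), mk hunif hpairs (rot (rot q))} := by
  simp [T]

lemma T_rot (q : Flag E) : T hunif hpairs (rot q) = T hunif hpairs q := by
  rw [T_def, T_def, rot_rot_rot]
  ext x; simp [Finset.mem_insert]; tauto

lemma tau_rot_rot (q : Flag E) : tau (rot (rot q)) = rot (tau q) := flag_ext rfl rfl rfl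
lemma tau_rot (q : Flag E) : tau (rot q) = rot (rot (tau q)) := flag_ext rfl rfl rfl

lemma T_tau (q : Flag E) : T hunif hpairs (tau q) = T hunif hpairs q := by
  have e1 : mk hunif hpairs (tau q) = mk hunif hpairs q := mk_tau hunif hpairs q
  have e2 : mk hunif hpairs (rot (tau q)) = mk hunif hpairs (rot (rot q)) := by
    rw [← tau_rot_rot, mk_tau]
  have e3 : mk hunif hpairs (rot (rot (tau q))) = mk hunif hpairs (rot q) := by
    rw [← tau_rot, mk_tau]
  rw [T_def, T_def, e1, e2, e3]
  ext x; simp [Finset.mem_insert]; tauto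

lemma mk_ne_rot (q : Flag E) : mk hunif hpairs q ≠ mk hunif hpairs (rot q) := by
  intro h
  have := congrArg (vmap hunif hpairs) h
  rw [vmap_mk, vmap_mk, rot_v1] at this
  exact (flag_ne hunif q).1 this

lemma mk_ne_rot2 (q : Flag E) : mk hunif hpairs q ≠ mk hunif hpairs (rot (rot q)) := by
  intro h
  have := congrArg (vmap hunif hpairs) h
  rw [vmap_mk, vmap_mk, rot_v1, rot_v2] at this
  exact (flag_ne hunif q).2.1 this

lemma mk_rot_ne_rot2 (q : Flag E) :
    mk hunif hpairs (rot q) ≠ mk hunif hpairs (rot (rot q)) := by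
  intro h
  have := congrArg (vmap hunif hpairs) h
  rw [vmap_mk, vmap_mk, rot_v1, rot_v1, rot_v2] at this
  exact (flag_ne hunif q).2.2 this

lemma T_card (q : Flag E) : (T hunif hpairs q).card = 3 := by
  rw [T_def, Finset.card_insert_of_notMem, Finset.card_insert_of_notMem, Finset.card_singleton]
  · simp [mk_rot_ne_rot2 hunif hpairs q]
  · simp [mk_ne_rot hunif hpairs q, mk_ne_rot2 hunif hpairs q]

lemma T_image (q : Flag E) :
    (T hunif hpairs q).image (vmap hunif hpairs) = {v1 q, v2 q, v3 q} := by
  rw [T_def]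
  rw [Finset.image_insert, Finset.image_insert, Finset.image_singleton]
  rw [vmap_mk, vmap_mk, vmap_mk, rot_v1, rot_v1, rot_v2]

lemma mem_T (q : Flag E) : mk hunif hpairs q ∈ T hunif hpairs q := by
  rw [T_def]; exact Finset.mem_insert_self _ _

lemma T_erase (q : Flag E) : (T hunif hpairs q).erase (mk hunif hpairs q) =
    {mk hunif hpairs (rot q), mk hunif hpairs (rot (rot q))} := by
  rw [T_def]
  apply Finset.erase_insert
  simp [mk_ne_rot hunif hpairs q, mk_ne_rot2 hunif hpairs q]

/-- lifted complex -/
noncomputable def Sc : Finset (Finset (CloneT hunif hpairs)) :=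
  (Finset.univ : Finset (Flag E)).image (T hunif hpairs)

lemma mem_Sc {e : Finset (CloneT hunif hpairs)} :
    e ∈ Sc hunif hpairs ↔ ∃ q : Flag E, T hunif hpairs q = e := by
  simp [Sc]

lemma triangle_inj (q q' : Flag E)
    (heq : (T hunif hpairs q').image (vmap hunif hpairs)
         = (T hunif hpairs q).image (vmap hunif hpairs)) :
    T hunif hpairs q' = T hunif hpairs q := by
  rw [T_image, T_image] at heq
  have hq := flag_ne hunif q
  have hq' := flag_ne hunif q'
  have m1 : v1 q' = v1 q ∨ v1 q' = v2 q ∨ v1 q' = v3 q := by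
    have : v1 q' ∈ ({v1 q, v2 q, v3 q} : Finset V) := by
      rw [← heq]; simp
    simpa using this
  have m2 : v2 q' = v1 q ∨ v2 q' = v2 q ∨ v2 q' = v3 q := by
    have : v2 q' ∈ ({v1 q, v2 q, v3 q} : Finset V) := by
      rw [← heq]; simp
    simpa using this
  have m3 : v3 q' = v1 q ∨ v3 q' = v2 q ∨ v3 q' = v3 q := by
    have : v3 q' ∈ ({v1 q, v2 q, v3 q} : Finset V) := by
      rw [← heq]; simp
    simpa using this
  rcases m1 with h1 | h1 | h1 <;> rcases m2 with h2 | h2 | h2 <;> rcases m3 with h3 | h3 | h3 <;>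
  first
  | exact absurd (h1.trans h2.symm) hq'.1
  | exact absurd (h1.trans h3.symm) hq'.2.1
  | exact absurd (h2.trans h3.symm) hq'.2.2
  | rw [show q' = q from flag_ext h1 h2 h3]
  | rw [show q' = rot q from flag_ext h1 h2 h3, T_rot]
  | rw [show q' = rot (rot q) from flag_ext h1 h2 h3, T_rot, T_rot]
  | rw [show q' = tau q from flag_ext h1 h2 h3, T_tau]
  | rw [show q' = tau (rot q) from flag_ext h1 h2 h3, T_tau, T_rot]
  | rw [show q' = tau (rot (rot q)) from flag_ext h1 h2 h3, T_tau, T_rot, T_rot]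

/-- lifted pair (1-face) -/
noncomputable def PP (q : Flag E) : Finset (CloneT hunif hpairs) :=
  {mk hunif hpairs q, mk hunif hpairs (rot q)}

lemma PP_image (q : Flag E) :
    (PP hunif hpairs q).image (vmap hunif hpairs) = {v1 q, v2 q} := by
  rw [PP, Finset.image_insert, Finset.image_singleton, vmap_mk, vmap_mk, rot_v1]

lemma PP_def (q : Flag E) : PP hunif hpairs q =
    {mk hunif hpairs q, mk hunif hpairs (rot q)} := rfl

lemma pair_sub_T {p : Finset (CloneT hunif hpairs)} {q : Flag E}
    (hsub : p ⊆ T hunif hpairs q) (hcard : p.card = 2) :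
    p = PP hunif hpairs q ∨ p = PP hunif hpairs (rot q) ∨
      p = PP hunif hpairs (rot (rot q)) := by
  obtain ⟨s, t, hst, rfl⟩ := Finset.card_eq_two.mp hcard
  have hs : s = mk hunif hpairs q ∨ s = mk hunif hpairs (rot q) ∨
      s = mk hunif hpairs (rot (rot q)) := by
    have : s ∈ T hunif hpairs q := hsub (by simp)
    rw [T_def] at this; simpa using this
  have ht : t = mk hunif hpairs q ∨ t = mk hunif hpairs (rot q) ∨
      t = mk hunif hpairs (rot (rot q)) := by
    have : t ∈ T hunif hpairs q := hsub (by simp)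
    rw [T_def] at this; simpa using this
  rcases hs with rfl | rfl | rfl <;> rcases ht with rfl | rfl | rfl <;>
    rw [PP_def, PP_def, PP_def, rot_rot_rot] <;>
  first
  | exact absurd rfl hst
  | (left; rfl)
  | (right; left; rfl)
  | (right; right; rfl)
  | (left; exact Finset.pair_comm _ _)
  | (right; left; exact Finset.pair_comm _ _)
  | (right; right; exact Finset.pair_comm _ _)

lemma mk_congr12 {q q' : Flag E} (h1 : v1 q = v1 q') (h2 : v2 q = v2 q') :
    mk hunif hpairs q = mk hunif hpairs q' := by
  obtain ⟨⟨a, b, c⟩, hm⟩ := q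
  obtain ⟨⟨a', b', c'⟩, hm'⟩ := q'
  have ha : a = a' := h1
  have hb : b = b' := h2
  subst ha; subst hb
  exact clone_coh hunif hpairs hm hm'

lemma mk_rot_congr {q q' : Flag E} (h1 : v1 q = v1 q') (h2 : v2 q = v2 q') :
    mk hunif hpairs (rot q) = mk hunif hpairs (rot q') := by
  calc mk hunif hpairs (rot q) = mk hunif hpairs (tau (rot q)) :=
        (mk_tau hunif hpairs _).symm
    _ = mk hunif hpairs (tau (rot q')) := mk_congr12 hunif hpairs h2 h1
    _ = mk hunif hpairs (rot q') := mk_tau hunif hpairs _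

lemma PP_congr {q q' : Flag E} (h1 : v1 q = v1 q') (h2 : v2 q = v2 q') :
    PP hunif hpairs q = PP hunif hpairs q' := by
  rw [PP, PP, mk_congr12 hunif hpairs h1 h2, mk_rot_congr hunif hpairs h1 h2]

lemma PP_swap (q : Flag E) : PP hunif hpairs (tau (rot q)) = PP hunif hpairs q := by
  have hr : rot (tau (rot q)) = tau q := flag_ext rfl rfl rfl
  rw [PP, PP, hr, mk_tau, mk_tau]
  exact Finset.pair_comm _ _

lemma pair_eq_pair {α : Type*} [DecidableEq α] {a b c d : α} (hab : a ≠ b)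
    (h : ({a, b} : Finset α) = {c, d}) : (a = c ∧ b = d) ∨ (a = d ∧ b = c) := by
  have hc : c = a ∨ c = b := by
    have : c ∈ ({a, b} : Finset α) := h ▸ (by simp)
    simpa using this
  have hd : d = a ∨ d = b := by
    have : d ∈ ({a, b} : Finset α) := h ▸ (by simp)
    simpa using this
  have ha : a = c ∨ a = d := by
    have : a ∈ ({c, d} : Finset α) := h ▸ (by simp)
    simpa using this
  have hb : b = c ∨ b = d := by
    have : b ∈ ({c, d} : Finset α) := h ▸ (by simp)
    simpa using this
  rcases ha with h1 | h1 <;> rcases hb with h2 | h2 <;> tauto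

lemma PP_eq_of_image {y y' : Flag E}
    (h : (PP hunif hpairs y).image (vmap hunif hpairs)
       = (PP hunif hpairs y').image (vmap hunif hpairs)) :
    PP hunif hpairs y = PP hunif hpairs y' := by
  rw [PP_image, PP_image] at h
  rcases pair_eq_pair (flag_ne hunif y).1 h with ⟨h1, h2⟩ | ⟨h1, h2⟩
  · exact PP_congr hunif hpairs h1 h2
  · rw [← PP_swap hunif hpairs y']
    exact PP_congr hunif hpairs h1 h2

section Cycle

variable (q₀ : Flag E)

/-- the `σ`-orbit of the base flag -/
noncomputable def pOrb (a : ℕ) : Flag E := ((sig hunif hpairs) ^ a) q₀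

/-- length of the link cycle at the clone of `q₀` -/
noncomputable def mPer : ℕ := Function.minimalPeriod (⇑(sig hunif hpairs)) q₀

lemma pOrb_coe (a : ℕ) : pOrb hunif hpairs q₀ a = (⇑(sig hunif hpairs))^[a] q₀ := by
  rw [pOrb, ← Equiv.Perm.coe_pow]

lemma mPer_pos : 0 < mPer hunif hpairs q₀ := by
  apply Function.minimalPeriod_pos_of_mem_periodicPts
  refine ⟨orderOf (sig hunif hpairs), orderOf_pos _, ?_⟩
  show (⇑(sig hunif hpairs))^[orderOf (sig hunif hpairs)] q₀ = q₀
  rw [← Equiv.Perm.coe_pow]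
  exact sig_pow_order hunif hpairs q₀

lemma pOrb_mPer : pOrb hunif hpairs q₀ (mPer hunif hpairs q₀) = q₀ := by
  rw [pOrb_coe]; exact Function.iterate_minimalPeriod

lemma pOrb_inj {a b : ℕ} (ha : a < mPer hunif hpairs q₀) (hb : b < mPer hunif hpairs q₀)
    (h : pOrb hunif hpairs q₀ a = pOrb hunif hpairs q₀ b) : a = b := by
  rw [pOrb_coe, pOrb_coe] at h
  exact Function.iterate_injOn_Iio_minimalPeriod ha hb h

lemma pOrb_add (b a : ℕ) :
    pOrb hunif hpairs q₀ (b + a) = ((sig hunif hpairs) ^ b) (pOrb hunif hpairs q₀ a) := by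
  rw [pOrb, pOrb, pow_add]; rfl

lemma pOrb_succ (a : ℕ) :
    pOrb hunif hpairs q₀ (a + 1) = sig hunif hpairs (pOrb hunif hpairs q₀ a) := by
  rw [show a + 1 = 1 + a by omega, pOrb_add, pow_one]

lemma pOrb_mod (a : ℕ) :
    pOrb hunif hpairs q₀ (a % mPer hunif hpairs q₀) = pOrb hunif hpairs q₀ a := by
  rw [pOrb_coe, pOrb_coe]
  exact Function.iterate_mod_minimalPeriod_eq

lemma pOrb_v1 (a : ℕ) : v1 (pOrb hunif hpairs q₀ a) = v1 q₀ := v1_pow hunif hpairs a q₀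

lemma mPer_ge_three : 3 ≤ mPer hunif hpairs q₀ := by
  have h0 := mPer_pos hunif hpairs q₀
  by_contra hlt
  push_neg at hlt
  have hcase : mPer hunif hpairs q₀ = 1 ∨ mPer hunif hpairs q₀ = 2 := by omega
  rcases hcase with h | h
  · -- m = 1 : σ q₀ = q₀, so v3 q₀ = v2 q₀, contradiction
    have h1 : pOrb hunif hpairs q₀ 1 = pOrb hunif hpairs q₀ 0 := by
      have := pOrb_mod hunif hpairs q₀ 1
      rw [h] at this; simpa using this.symm
    have h2 : sig hunif hpairs q₀ = q₀ := by
      rw [pOrb_succ] at h1; exact h1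
    have := congrArg v2 h2
    rw [sig_apply, nxt_v2] at this
    exact (flag_ne hunif q₀).2.2 this.symm
  · -- m = 2 : σ² q₀ = q₀, so v3 (σ q₀) = v2 q₀, contradicting nxt_ne
    have h1 : pOrb hunif hpairs q₀ 2 = pOrb hunif hpairs q₀ 0 := by
      have := pOrb_mod hunif hpairs q₀ 2
      rw [h] at this; simpa using this.symm
    have h2 : sig hunif hpairs (sig hunif hpairs q₀) = q₀ := by
      rw [show (2 : ℕ) = 1 + 1 from rfl, pOrb_succ, pOrb_succ] at h1
      exact h1
    have := congrArg v2 h2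
    simp only [sig_apply, nxt_v2] at this
    exact nxt_ne hunif hpairs q₀ this

lemma tau_pOrb {t : ℕ} (ht : tau q₀ = pOrb hunif hpairs q₀ t) {k : ℕ}
    (hk : k ≤ mPer hunif hpairs q₀) :
    tau (pOrb hunif hpairs q₀ k) = pOrb hunif hpairs q₀ (mPer hunif hpairs q₀ - k + t) := by
  set m := mPer hunif hpairs q₀
  have key := tau_sig_pow hunif hpairs (m - k) (pOrb hunif hpairs q₀ k)
  have h1 : ((sig hunif hpairs) ^ (m - k)) (pOrb hunif hpairs q₀ k) = q₀ := by
    rw [← pOrb_add, Nat.sub_add_cancel hk]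
    exact pOrb_mPer hunif hpairs q₀
  rw [h1, ht, ← pOrb_add] at key
  exact key.symm

lemma fCyc_inj_aux {i' j' : ℕ} (hi : i' < mPer hunif hpairs q₀) (hj : j' < mPer hunif hpairs q₀)
    (hc : v3 (pOrb hunif hpairs q₀ i') = v3 (pOrb hunif hpairs q₀ j'))
    (hb : v2 (pOrb hunif hpairs q₀ i') ≠ v2 (pOrb hunif hpairs q₀ j')) : False := by
  set m := mPer hunif hpairs q₀ with hm
  have hm3 : 3 ≤ m := mPer_ge_three hunif hpairs q₀
  set pi := pOrb hunif hpairs q₀ i' with hpi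
  set pj := pOrb hunif hpairs q₀ j' with hpj
  -- σ pᵢ = τ pⱼ
  have hmem : ({v1 pi, v3 pi, v2 pj} : Finset V) ∈ E := by
    have h := flag_mem' pj
    rw [show v1 pj = v1 pi from (pOrb_v1 hunif hpairs q₀ j').trans (pOrb_v1 hunif hpairs q₀ i').symm,
      show v3 pj = v3 pi from hc.symm] at h
    exact h
  have step : sig hunif hpairs pi = tau pj := by
    rcases nxt_spec hunif hpairs pi (v2 pj) hmem with hx | hx
    · exact absurd hx.symm hb
    · refine flag_ext ?_ ?_ hx.symm
      · exact (pOrb_v1 hunif hpairs q₀ i').trans (pOrb_v1 hunif hpairs q₀ j').symm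
      · exact hc
  -- τ q₀ is on the orbit
  have htq : tau q₀ = pOrb hunif hpairs q₀ (j' + (i' + 1)) := by
    have k1 := tau_sig_pow hunif hpairs j' q₀
    have h2 : tau pj = pOrb hunif hpairs q₀ (i' + 1) := by
      rw [← step, pOrb_succ]
    rw [show ((sig hunif hpairs) ^ j') q₀ = pj from rfl, h2, ← pOrb_add] at k1
    exact k1.symm
  set t := j' + (i' + 1) with htdef
  set r := t % m with hrdef
  set k := r / 2 with hkdef
  have hrm : r < m := Nat.mod_lt _ (by omega)
  have htau := tau_pOrb hunif hpairs q₀ htq (show k ≤ m by omega)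
  have hmod : pOrb hunif hpairs q₀ (m - k + t) = pOrb hunif hpairs q₀ (r - k) := by
    have h1 : (m - k + t) % m = (m - k + r) % m := by
      have := (Nat.mod_modEq t m).symm
      exact Nat.ModEq.add_left (m - k) this
    have h2 : m - k + r = (r - k) + m := by omega
    have h3 : (m - k + t) % m = (r - k) % m := by
      rw [h1, h2, Nat.add_mod_right]
    rw [← pOrb_mod hunif hpairs q₀ (m - k + t), h3, pOrb_mod]
  by_cases hpar : r % 2 = 0
  · -- even case : τ (p k) = p k
    have hrk : r - k = k := by omega
    have : tau (pOrb hunif hpairs q₀ k) = pOrb hunif hpairs q₀ k := by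
      rw [htau, hmod, hrk]
    have h3 := congrArg v3 this
    rw [tau_v3] at h3
    exact (flag_ne hunif (pOrb hunif hpairs q₀ k)).2.2 h3
  · -- odd case : τ (p k) = σ (p k)
    have hrk : r - k = k + 1 := by omega
    have : tau (pOrb hunif hpairs q₀ k) = sig hunif hpairs (pOrb hunif hpairs q₀ k) := by
      rw [htau, hmod, hrk, pOrb_succ]
    have h3 := congrArg v3 this
    rw [tau_v3, sig_apply] at h3
    exact nxt_ne hunif hpairs (pOrb hunif hpairs q₀ k) h3.symm

/-- the cyclic enumeration of the link of the clone of `q₀` -/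
noncomputable def fCyc (i : ZMod (mPer hunif hpairs q₀)) : CloneT hunif hpairs :=
  mk hunif hpairs (rot (rot (pOrb hunif hpairs q₀ i.val)))

lemma fCyc_nat (a : ℕ) : fCyc hunif hpairs q₀ (a : ZMod (mPer hunif hpairs q₀))
    = mk hunif hpairs (rot (rot (pOrb hunif hpairs q₀ a))) := by
  haveI : NeZero (mPer hunif hpairs q₀) := ⟨by have := mPer_pos hunif hpairs q₀; omega⟩
  rw [fCyc, ZMod.val_natCast, pOrb_mod]

lemma fCyc_inj : Function.Injective (fCyc hunif hpairs q₀) := by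
  haveI : NeZero (mPer hunif hpairs q₀) := ⟨by have := mPer_pos hunif hpairs q₀; omega⟩
  intro i j h
  have hi : i.val < mPer hunif hpairs q₀ := ZMod.val_lt i
  have hj : j.val < mPer hunif hpairs q₀ := ZMod.val_lt j
  have hc : v3 (pOrb hunif hpairs q₀ i.val) = v3 (pOrb hunif hpairs q₀ j.val) := by
    have := rel_v1 hunif hpairs (mk_exact hunif hpairs h)
    exact this
  by_cases hb : v2 (pOrb hunif hpairs q₀ i.val) = v2 (pOrb hunif hpairs q₀ j.val)
  · have hq : pOrb hunif hpairs q₀ i.val = pOrb hunif hpairs q₀ j.val := by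
      refine flag_ext ?_ hb hc
      exact (pOrb_v1 hunif hpairs q₀ _).trans (pOrb_v1 hunif hpairs q₀ _).symm
    have := pOrb_inj hunif hpairs q₀ hi hj hq
    calc i = ((i.val : ℕ) : ZMod (mPer hunif hpairs q₀)) := (ZMod.natCast_zmod_val i).symm
      _ = ((j.val : ℕ) : ZMod (mPer hunif hpairs q₀)) := by rw [this]
      _ = j := ZMod.natCast_zmod_val j
  · exact absurd (fCyc_inj_aux hunif hpairs q₀ hi hj hc hb) (by simp)

lemma mk_pOrb (a : ℕ) :
    mk hunif hpairs (pOrb hunif hpairs q₀ a) = mk hunif hpairs q₀ :=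
  mk_pow hunif hpairs a q₀

lemma erase_step (a : ℕ) :
    mk hunif hpairs q₀ ∈ T hunif hpairs (pOrb hunif hpairs q₀ (a + 1)) ∧
    (T hunif hpairs (pOrb hunif hpairs q₀ (a + 1))).erase (mk hunif hpairs q₀) =
      {fCyc hunif hpairs q₀ (a : ZMod (mPer hunif hpairs q₀)),
       fCyc hunif hpairs q₀ ((a : ZMod (mPer hunif hpairs q₀)) + 1)} := by
  set p1 := pOrb hunif hpairs q₀ (a + 1) with hp1
  have hw : mk hunif hpairs p1 = mk hunif hpairs q₀ := mk_pOrb hunif hpairs q₀ (a + 1)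
  constructor
  · rw [← hw]; exact mem_T hunif hpairs p1
  · have he : (T hunif hpairs p1).erase (mk hunif hpairs q₀) =
        {mk hunif hpairs (rot p1), mk hunif hpairs (rot (rot p1))} := by
      rw [← hw]; exact T_erase hunif hpairs p1
    rw [he]
    have hcast : ((a : ZMod (mPer hunif hpairs q₀)) + 1)
        = ((a + 1 : ℕ) : ZMod (mPer hunif hpairs q₀)) := by push_cast; ring
    rw [hcast, fCyc_nat, fCyc_nat]
    have h1 : v1 (tau (rot p1)) = v1 (rot (rot (pOrb hunif hpairs q₀ a))) := by
      show v2 p1 = v3 (pOrb hunif hpairs q₀ a)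
      rw [hp1, pOrb_succ]; rfl
    have h2 : v2 (tau (rot p1)) = v2 (rot (rot (pOrb hunif hpairs q₀ a))) := by
      show v1 p1 = v1 (pOrb hunif hpairs q₀ a)
      rw [hp1, pOrb_v1, pOrb_v1]
    have key : mk hunif hpairs (rot p1)
        = mk hunif hpairs (rot (rot (pOrb hunif hpairs q₀ a))) := by
      rw [← mk_tau hunif hpairs (rot p1)]
      exact mk_congr12 hunif hpairs h1 h2
    rw [key]

lemma link_eq :
    {P : Finset (CloneT hunif hpairs) | ∃ e ∈ Sc hunif hpairs,
        mk hunif hpairs q₀ ∈ e ∧ P = e.erase (mk hunif hpairs q₀)} =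
    {P : Finset (CloneT hunif hpairs) | ∃ i : ZMod (mPer hunif hpairs q₀),
        P = {fCyc hunif hpairs q₀ i, fCyc hunif hpairs q₀ (i + 1)}} := by
  haveI : NeZero (mPer hunif hpairs q₀) := ⟨by have := mPer_pos hunif hpairs q₀; omega⟩
  set m := mPer hunif hpairs q₀ with hm
  ext P
  simp only [Set.mem_setOf_eq]
  constructor
  · rintro ⟨e, heS, hwe, rfl⟩
    obtain ⟨x₀, rfl⟩ := (mem_Sc hunif hpairs).mp heS
    -- find a flag x with T x = T x₀ and w = mk x
    have hx : ∃ x : Flag E, T hunif hpairs x₀ = T hunif hpairs x ∧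
        mk hunif hpairs q₀ = mk hunif hpairs x := by
      rw [T_def] at hwe
      simp only [Finset.mem_insert, Finset.mem_singleton] at hwe
      rcases hwe with h | h | h
      · exact ⟨x₀, rfl, h⟩
      · exact ⟨rot x₀, (T_rot hunif hpairs x₀).symm, h⟩
      · exact ⟨rot (rot x₀),
          ((T_rot hunif hpairs (rot x₀)).trans (T_rot hunif hpairs x₀)).symm, h⟩
    obtain ⟨x, hTx, hwx⟩ := hx
    -- T x₀ = T (pOrb n) for some n
    have hT2 : ∃ n : ℕ, T hunif hpairs x₀ = T hunif hpairs (pOrb hunif hpairs q₀ n) := by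
      rcases mk_exact hunif hpairs hwx with ⟨n, hn⟩ | ⟨n, hn⟩
      · exact ⟨n, by rw [hTx, ← hn]; rfl⟩
      · refine ⟨n, ?_⟩
        have hxeq : x = tau (pOrb hunif hpairs q₀ n) := by
          rw [show pOrb hunif hpairs q₀ n = ((sig hunif hpairs) ^ n) q₀ from rfl, hn, tau_tau]
        rw [hTx, hxeq, T_tau]
    obtain ⟨n, hT2⟩ := hT2
    have hnm : pOrb hunif hpairs q₀ (n + m - 1 + 1) = pOrb hunif hpairs q₀ n := by
      have h1 : n + m - 1 + 1 = n + m := by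
        have := mPer_pos hunif hpairs q₀; omega
      rw [h1, ← pOrb_mod hunif hpairs q₀ (n + m), Nat.add_mod_right, pOrb_mod]
    refine ⟨((n + m - 1 : ℕ) : ZMod m), ?_⟩
    have hstep := erase_step hunif hpairs q₀ (n + m - 1)
    rw [hT2, ← hnm, hstep.2]
  · rintro ⟨i, rfl⟩
    refine ⟨T hunif hpairs (pOrb hunif hpairs q₀ (i.val + 1)),
      (mem_Sc hunif hpairs).mpr ⟨_, rfl⟩, (erase_step hunif hpairs q₀ i.val).1, ?_⟩
    rw [(erase_step hunif hpairs q₀ i.val).2, ZMod.natCast_zmod_val]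

end Cycle

include hunif hpairs in
lemma master (hne : E.Nonempty) :
    (Sc hunif hpairs).Nonempty ∧ (∀ e ∈ Sc hunif hpairs, e.card = 3) ∧
      (∀ w : CloneT hunif hpairs, (∃ e ∈ Sc hunif hpairs, w ∈ e) →
        ∃ m : ℕ, 3 ≤ m ∧ ∃ f : ZMod m → CloneT hunif hpairs, Function.Injective f ∧
          {p : Finset (CloneT hunif hpairs) | ∃ e ∈ Sc hunif hpairs, w ∈ e ∧ p = e.erase w} =
            {p : Finset (CloneT hunif hpairs) | ∃ i : ZMod m, p = {f i, f (i + 1)}}) ∧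
      (∀ e ∈ Sc hunif hpairs, (e.image (vmap hunif hpairs)).card = 3 ∧
        e.image (vmap hunif hpairs) ∈ E) ∧
      (∀ e ∈ Sc hunif hpairs, ∀ e' ∈ Sc hunif hpairs,
        e.image (vmap hunif hpairs) = e'.image (vmap hunif hpairs) → e = e') ∧
      (∀ p p' : Finset (CloneT hunif hpairs),
        (∃ e ∈ Sc hunif hpairs, p ⊆ e ∧ p.card = 2) →
        (∃ e ∈ Sc hunif hpairs, p' ⊆ e ∧ p'.card = 2) →
        p.image (vmap hunif hpairs) = p'.image (vmap hunif hpairs) → p = p') := by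
  refine ⟨?_, ?_, ?_, ?_, ?_, ?_⟩
  · -- nonempty
    obtain ⟨e, he⟩ := hne
    obtain ⟨a, b, c, -, -, -, rfl⟩ := Finset.card_eq_three.mp (hunif e he)
    exact ⟨T hunif hpairs ⟨(a, b, c), he⟩, (mem_Sc hunif hpairs).mpr ⟨_, rfl⟩⟩
  · -- cards
    intro e heS
    obtain ⟨q, rfl⟩ := (mem_Sc hunif hpairs).mp heS
    exact T_card hunif hpairs q
  · -- links
    intro w ⟨e, heS, hwe⟩
    obtain ⟨x₀, rfl⟩ := (mem_Sc hunif hpairs).mp heS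
    have hx : ∃ x : Flag E, w = mk hunif hpairs x := by
      rw [T_def] at hwe
      simp only [Finset.mem_insert, Finset.mem_singleton] at hwe
      rcases hwe with h | h | h
      · exact ⟨x₀, h⟩
      · exact ⟨rot x₀, h⟩
      · exact ⟨rot (rot x₀), h⟩
    obtain ⟨x, rfl⟩ := hx
    refine ⟨mPer hunif hpairs x, mPer_ge_three hunif hpairs x, fCyc hunif hpairs x,
      fCyc_inj hunif hpairs x, link_eq hunif hpairs x⟩
  · -- image is a face of E
    intro e heS
    obtain ⟨q, rfl⟩ := (mem_Sc hunif hpairs).mp heS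
    rw [T_image]
    exact ⟨hunif _ (flag_mem q), flag_mem q⟩
  · -- injective on triangles
    intro e heS e' heS' himg
    obtain ⟨q, rfl⟩ := (mem_Sc hunif hpairs).mp heS
    obtain ⟨q', rfl⟩ := (mem_Sc hunif hpairs).mp heS'
    exact (triangle_inj hunif hpairs q q' himg.symm).symm
  · -- injective on edges
    intro p p' ⟨e, heS, hsub, hcard⟩ ⟨e', heS', hsub', hcard'⟩ himg
    obtain ⟨q, rfl⟩ := (mem_Sc hunif hpairs).mp heS
    obtain ⟨q', rfl⟩ := (mem_Sc hunif hpairs).mp heS'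
    have h1 := pair_sub_T hunif hpairs hsub hcard
    have h2 := pair_sub_T hunif hpairs hsub' hcard'
    rcases h1 with rfl | rfl | rfl <;> rcases h2 with rfl | rfl | rfl <;>
      exact PP_eq_of_image hunif hpairs himg

end Next

end Stmt18

open Stmt18 in
/-- Every non-empty 3-uniform hypergraph `G` in which every pair of vertices is contained in
exactly 0 or exactly 2 edges (every vertex link is a 2-regular graph) contains a 0-immersion of
a closed surface: there is a 3-uniform complex `S` in which the link of every covered vertex is
a single cycle (so `S` is homeomorphic to a disjoint union of closed surfaces), together with a
simplicial map `φ : S → G` which is injective on 1-faces (edges) and on 2-faces (triangles). -/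
theorem stmt_18 {V : Type*} [Fintype V] [DecidableEq V]
    (E : Finset (Finset V)) (hne : E.Nonempty)
    (hunif : ∀ e ∈ E, e.card = 3)
    (hpairs : ∀ u v : V, u ≠ v →
      (E.filter (fun e => u ∈ e ∧ v ∈ e)).card = 0 ∨
      (E.filter (fun e => u ∈ e ∧ v ∈ e)).card = 2) :
    ∃ (W : Type) (_ : Fintype W) (_ : DecidableEq W)
      (S : Finset (Finset W)) (φ : W → V),
      S.Nonempty ∧ (∀ e ∈ S, e.card = 3) ∧
      -- the link of every covered vertex of `S` is a single cycle
      (∀ w : W, (∃ e ∈ S, w ∈ e) →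
        ∃ m : ℕ, 3 ≤ m ∧ ∃ f : ZMod m → W, Function.Injective f ∧
          {p : Finset W | ∃ e ∈ S, w ∈ e ∧ p = e.erase w} =
            {p : Finset W | ∃ i : ZMod m, p = {f i, f (i + 1)}}) ∧
      -- `φ` maps 2-faces of `S` to 2-faces of `G` (injectively on each face)
      (∀ e ∈ S, (e.image φ).card = 3 ∧ e.image φ ∈ E) ∧
      -- `φ` is injective on 2-faces
      (∀ e ∈ S, ∀ e' ∈ S, e.image φ = e'.image φ → e = e') ∧
      -- `φ` is injective on 1-faces
      (∀ p p' : Finset W, (∃ e ∈ S, p ⊆ e ∧ p.card = 2) →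
        (∃ e ∈ S, p' ⊆ e ∧ p'.card = 2) → p.image φ = p'.image φ → p = p') := by
  classical
  obtain ⟨hne1, hcard, hlink, himg, htri, hedge⟩ := Stmt18.master hunif hpairs hne
  set C := Stmt18.CloneT hunif hpairs with hC
  let n := Fintype.card C
  let g : C ≃ Fin n := Fintype.equivFin C
  have hcomp : ((Stmt18.vmap hunif hpairs) ∘ g.symm) ∘ g = Stmt18.vmap hunif hpairs := by
    funext w; simp
  have himg_comp : ∀ s : Finset C,
      (s.image g).image ((Stmt18.vmap hunif hpairs) ∘ g.symm)
        = s.image (Stmt18.vmap hunif hpairs) := by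
    intro s; rw [Finset.image_image, hcomp]
  refine ⟨Fin n, inferInstance, inferInstance,
    (Stmt18.Sc hunif hpairs).image (fun s => s.image g),
    (Stmt18.vmap hunif hpairs) ∘ g.symm, ?_, ?_, ?_, ?_, ?_, ?_⟩
  · exact hne1.image _
  · intro e he
    obtain ⟨s, hs, rfl⟩ := Finset.mem_image.mp he
    rw [Finset.card_image_of_injective _ g.injective]
    exact hcard s hs
  · rintro w₀ ⟨e₀, he₀, hw₀⟩
    obtain ⟨s, hsS, rfl⟩ := Finset.mem_image.mp he₀
    obtain ⟨w, hws, rfl⟩ := Finset.mem_image.mp hw₀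
    obtain ⟨m, hm, f, hfinj, hset⟩ := hlink w ⟨s, hsS, hws⟩
    refine ⟨m, hm, g ∘ f, g.injective.comp hfinj, ?_⟩
    ext P
    simp only [Set.mem_setOf_eq]
    constructor
    · rintro ⟨e₀, he₀', hwe₀, rfl⟩
      obtain ⟨s', hs', rfl⟩ := Finset.mem_image.mp he₀'
      have hw' : w ∈ s' := by
        obtain ⟨x, hx, hgx⟩ := Finset.mem_image.mp hwe₀
        rwa [g.injective hgx] at hx
      have hmem : s'.erase w ∈
          {p : Finset C | ∃ e ∈ Stmt18.Sc hunif hpairs, w ∈ e ∧ p = e.erase w} :=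
        ⟨s', hs', hw', rfl⟩
      rw [hset] at hmem
      obtain ⟨i, hi⟩ := hmem
      refine ⟨i, ?_⟩
      rw [← Finset.image_erase g.injective, hi]
      simp
    · rintro ⟨i, rfl⟩
      have hmem : ({f i, f (i + 1)} : Finset C) ∈
          {p : Finset C | ∃ i : ZMod m, p = {f i, f (i + 1)}} := ⟨i, rfl⟩
      rw [← hset] at hmem
      obtain ⟨e, heS, hwe, herase⟩ := hmem
      refine ⟨e.image g, Finset.mem_image_of_mem _ heS, Finset.mem_image_of_mem g hwe, ?_⟩
      rw [← Finset.image_erase g.injective, ← herase]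
      simp
  · intro e₀ he₀
    obtain ⟨s, hs, rfl⟩ := Finset.mem_image.mp he₀
    rw [himg_comp]
    exact himg s hs
  · intro e₀ he₀ e₀' he₀' h
    obtain ⟨s, hs, rfl⟩ := Finset.mem_image.mp he₀
    obtain ⟨s', hs', rfl⟩ := Finset.mem_image.mp he₀'
    rw [himg_comp, himg_comp] at h
    rw [htri s hs s' hs' h]
  · rintro p₀ p₀' ⟨e₀, he₀, hsub, hc⟩ ⟨e₀', he₀', hsub', hc'⟩ h
    obtain ⟨s, hs, rfl⟩ := Finset.mem_image.mp he₀
    obtain ⟨s', hs', rfl⟩ := Finset.mem_image.mp he₀'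
    obtain ⟨p, hps, rfl⟩ := Finset.subset_image_iff.mp hsub
    obtain ⟨p', hps', rfl⟩ := Finset.subset_image_iff.mp hsub'
    rw [himg_comp, himg_comp] at h
    rw [Finset.card_image_of_injective _ g.injective] at hc hc'
    rw [hedge p p' ⟨s, hs, hps, hc⟩ ⟨s', hs', hps', hc'⟩ h]
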